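/- Let α : Y → Ȳ and β : X̄ → X be homotopy equivalences, and let f₁, …, f_n : X → Y and f'₁, …, f'_n : X̄ → Ȳ be continuous maps with α ∘ f_i ∘ β ≃ f'_i for every i = 1, …, n. Then D(f₁, …, f_n) = D(f'₁, …, f'_n). -/

import Mathlib

/-- The (higher) homotopic distance of a family of continuous maps `f i : X → Y`:
the least `l` such that `X` admits an open cover by `l` open sets on each of which
all the maps restrict to pairwise homotopic maps (`∞` if no such cover exists). -/
noncomputable def homDist {X Y : Type*} [TopologicalSpace X] [TopologicalSpace Y]
    {k : ℕ} (f : Fin k → C(X, Y)) : ℕ∞ :=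
  sInf ((fun n : ℕ => (n : ℕ∞)) '' {n : ℕ | ∃ U : Fin n → Set X,
    (∀ j, IsOpen (U j)) ∧ (⋃ j, U j) = Set.univ ∧
    ∀ j i i', ((f i).restrict (U j)).Homotopic ((f i').restrict (U j))})

/-- Homotopic distance of two maps. -/
noncomputable def homDist2 {X Y : Type*} [TopologicalSpace X] [TopologicalSpace Y]
    (f g : C(X, Y)) : ℕ∞ :=
  homDist ![f, g]

universe u

/-- A continuous map is a fibration if it has the homotopy lifting property with respect
to all spaces (in universe `u`). -/
def IsFibration {X Y : Type*} [TopologicalSpace X] [TopologicalSpace Y]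
    (f : C(X, Y)) : Prop :=
  ∀ (Z : Type u) [TopologicalSpace Z] (g : C(Z, X)) (G : C(Z × unitInterval, Y)),
    (∀ z, G (z, 0) = f (g z)) →
    ∃ G' : C(Z × unitInterval, X),
      (∀ p, f (G' p) = G p) ∧ ∀ z, G' (z, 0) = g z

/-- The Schwarz genus of a map `p : E → B`: the least number of open sets covering `B`
over each of which `p` admits a continuous local section. -/
noncomputable def secat {E B : Type*} [TopologicalSpace E] [TopologicalSpace B]
    (p : C(E, B)) : ℕ∞ :=
  sInf ((fun n : ℕ => (n : ℕ∞)) '' {n : ℕ | ∃ U : Fin n → Set B,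
    (∀ j, IsOpen (U j)) ∧ (⋃ j, U j) = Set.univ ∧
    ∀ j, ∃ s : C(U j, E), ∀ x : U j, p (s x) = (x : B)})

/-- The fibration `π_g : X^I → X × Y`, `β ↦ (β 0, g (β 1))`, associated to `g : X → Y`. -/
noncomputable def piMap {X Y : Type*} [TopologicalSpace X] [TopologicalSpace Y]
    (g : C(X, Y)) : C(C(unitInterval, X), X × Y) :=
  ⟨fun β => (β 0, g (β 1)),
    (continuous_eval_const 0).prodMk
      (g.continuous.comp (continuous_eval_const 1))⟩

/-- The topological complexity of a map `g : X → Y`, as the Schwarz genus of `π_g`. -/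
noncomputable def TCmap {X Y : Type*} [TopologicalSpace X] [TopologicalSpace Y]
    (g : C(X, Y)) : ℕ∞ :=
  secat (piMap g)

/-- Projection `pᵢ : Xⁿ → X` as a continuous map. -/
def projC {X : Type*} [TopologicalSpace X] {n : ℕ} (i : Fin n) : C((Fin n → X), X) :=
  ⟨fun x => x i, continuous_apply i⟩

/-! A cover on which the `f i` are pairwise homotopic serves unchanged for the `α ∘ f i`, and
pulls back along `β` to one for the `f i ∘ β`; so composing on both sides cannot increase
`homDist`, which moreover sees the maps only up to homotopy. With homotopy inverses `α'`, `β'`,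
each `f i` is homotopic to `α' ∘ (α ∘ f i ∘ β) ∘ β'`, which gives the reverse inequality. -/

section

open ContinuousMap

variable {X X' Y Z : Type*} [TopologicalSpace X] [TopologicalSpace X'] [TopologicalSpace Y]
  [TopologicalSpace Z] {k : ℕ}

theorem ContinuousMap.Homotopic.restrict {f g : C(X, Y)} (h : f.Homotopic g) (U : Set X) :
    (f.restrict U).Homotopic (g.restrict U) :=
  h.comp (.refl ⟨Subtype.val, continuous_subtype_val⟩)

theorem ContinuousMap.Homotopic.comp_comp_of_homotopic_id {α : C(Y, Z)} {α' : C(Z, Y)}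
    {β : C(X', X)} {β' : C(X, X')} (hα : (α'.comp α).Homotopic (.id Y))
    (hβ : (β.comp β').Homotopic (.id X)) (g : C(X, Y)) :
    ((α'.comp ((α.comp g).comp β)).comp β').Homotopic g :=
  (hα.comp (.refl g)).comp hβ

/-- `homDist f` is the least `m` for which such a `U` exists. -/
def IsHomotopyCover (f : Fin k → C(X, Y)) {m : ℕ} (U : Fin m → Set X) : Prop :=
  (∀ j, IsOpen (U j)) ∧ (⋃ j, U j) = Set.univ ∧
    ∀ j i i', ((f i).restrict (U j)).Homotopic ((f i').restrict (U j))

theorem homDist_le_homDist_of_forall_isHomotopyCover {f : Fin k → C(X, Y)}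
    {g : Fin k → C(X', Z)}
    (H : ∀ (m : ℕ) (U : Fin m → Set X), IsHomotopyCover f U →
      ∃ V : Fin m → Set X', IsHomotopyCover g V) :
    homDist g ≤ homDist f :=
  sInf_le_sInf <| Set.image_mono fun m ⟨U, hU⟩ => H m U hU

theorem homDist_comp_left_le (α : C(Y, Z)) (f : Fin k → C(X, Y)) :
    homDist (fun i => α.comp (f i)) ≤ homDist f :=
  homDist_le_homDist_of_forall_isHomotopyCover fun _ U ⟨hopen, hcover, hhom⟩ =>
    ⟨U, hopen, hcover, fun j i i' => (Homotopic.refl α).comp (hhom j i i')⟩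

theorem homDist_comp_right_le (β : C(X', X)) (f : Fin k → C(X, Y)) :
    homDist (fun i => (f i).comp β) ≤ homDist f := by
  refine homDist_le_homDist_of_forall_isHomotopyCover fun _ U ⟨hopen, hcover, hhom⟩ =>
    ⟨fun j => β ⁻¹' U j, fun j => (hopen j).preimage β.continuous, ?_, fun j i i' => ?_⟩
  · rw [← Set.preimage_iUnion, hcover, Set.preimage_univ]
  · exact (hhom j i i').comp (.refl (β.restrictPreimage (U j)))

theorem homDist_comp_le (α : C(Y, Z)) (β : C(X', X)) (f : Fin k → C(X, Y)) :
    homDist (fun i => (α.comp (f i)).comp β) ≤ homDist f :=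
  (homDist_comp_right_le β _).trans (homDist_comp_left_le α f)

theorem homDist_congr {f g : Fin k → C(X, Y)} (h : ∀ i, (f i).Homotopic (g i)) :
    homDist f = homDist g := by
  have transfer : ∀ {f g : Fin k → C(X, Y)}, (∀ i, (f i).Homotopic (g i)) →
      homDist g ≤ homDist f := fun h =>
    homDist_le_homDist_of_forall_isHomotopyCover fun _ U ⟨hopen, hcover, hhom⟩ =>
      ⟨U, hopen, hcover, fun j i i' =>
        ((h i).restrict (U j)).symm.trans ((hhom j i i').trans ((h i').restrict (U j)))⟩
  exact le_antisymm (transfer fun i => (h i).symm) (transfer h)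

end

theorem homDist_eq_of_conjugate_homotopy_equiv {X Y Xb Yb : Type*} [TopologicalSpace X]
    [TopologicalSpace Y] [TopologicalSpace Xb] [TopologicalSpace Yb] {n : ℕ}
    (α : C(Y, Yb)) (β : C(Xb, X))
    (hα : ∃ α' : C(Yb, Y), (α.comp α').Homotopic (ContinuousMap.id Yb) ∧
      (α'.comp α).Homotopic (ContinuousMap.id Y))
    (hβ : ∃ β' : C(X, Xb), (β.comp β').Homotopic (ContinuousMap.id X) ∧
      (β'.comp β).Homotopic (ContinuousMap.id Xb))
    (f : Fin n → C(X, Y)) (f' : Fin n → C(Xb, Yb))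
    (h : ∀ i, ((α.comp (f i)).comp β).Homotopic (f' i)) :
    homDist f = homDist f' := by
  obtain ⟨α', -, hα'α⟩ := hα
  obtain ⟨β', hββ', -⟩ := hβ
  have hf' : homDist (fun i => (α.comp (f i)).comp β) = homDist f' := homDist_congr h
  refine le_antisymm ?_ (hf' ▸ homDist_comp_le α β f)
  calc homDist f
      = homDist (fun i => (α'.comp ((α.comp (f i)).comp β)).comp β') :=
        (homDist_congr fun i => (hα'α.comp_comp_of_homotopic_id hββ' (f i))).symm
    _ ≤ homDist (fun i => (α.comp (f i)).comp β) := homDist_comp_le α' β' _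
    _ = homDist f' := hf'
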